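/- arXiv:2507.17468 — 2 statements merged into one kernel-verified Lean document; each statement's English description precedes it below -/
import Mathlib

section
/- Let τ : [1,∞) → [0,∞) be a non-decreasing right-continuous function and let D : (0,∞) → (0,∞) be a non-increasing left-continuous function such that for all a ≥ 1 and all t > 0: D(t) ≥ 1/a if and only if t ≤ τ(a). Then for every continuous function ψ : [0,∞) → ℝ and all b ≥ b₀ ≥ 1, the Lebesgue–Stieltjes integral satisfies ∫_{(b₀,b]} ψ(a⁻¹) dτ(a) = ∫_{τ(b₀)}^{τ(b)} ψ(D(t)) dt. -/
open MeasureTheory ProbabilityTheory Filter Set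

noncomputable section

/-- `W` is a standard Brownian motion (Wiener process) under the probability measure `μ`. -/
def IsStandardBM {Ω : Type*} [MeasurableSpace Ω] (μ : Measure Ω) (W : Ω → ℝ → ℝ) : Prop :=
  (∀ ω, W ω 0 = 0) ∧
  (∀ ω, Continuous fun t => W ω t) ∧
  (∀ t : ℝ, Measurable fun ω => W ω t) ∧
  (∀ s t : ℝ, 0 ≤ s → s ≤ t →
    Measure.map (fun ω => W ω t - W ω s) μ = gaussianReal 0 (Real.toNNReal (t - s))) ∧
  (∀ (n : ℕ) (t : ℕ → ℝ), Monotone t → (∀ i, 0 ≤ t i) →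
    iIndepFun (m := fun _ : Fin n => (inferInstance : MeasurableSpace ℝ))
      (fun i : Fin n => fun ω => W ω (t (i.val + 1)) - W ω (t i.val)) μ)

/-- `h` is absolutely continuous on `[0,T]` with a.e. derivative `g`. -/
def HasIntegralDeriv (T : ℝ) (h g : ℝ → ℝ) : Prop :=
  IntegrableOn g (Icc 0 T) ∧ ∀ t ∈ Icc 0 T, h t = h 0 + ∫ s in (0:ℝ)..t, g s

/-- Energy `∫_0^T ψ(h'(t)) dt` of an absolutely continuous function with derivative `g`. -/
def energy (ψ : ℝ → ℝ) (T : ℝ) (g : ℝ → ℝ) : ℝ := ∫ t in Ioc (0:ℝ) T, ψ (g t)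

/-- Minimal integral energy `I_w^ψ(T,r)` over absolutely continuous majorants of `w`
starting at height `r`. -/
def minEnergy (ψ w : ℝ → ℝ) (T r : ℝ) : ℝ :=
  sInf {E : ℝ | ∃ h g : ℝ → ℝ, HasIntegralDeriv T h g ∧ h 0 = r ∧
    (∀ t ∈ Icc 0 T, w t ≤ h t) ∧ E = energy ψ T g}

def SlowlyVaryingAtTop (g : ℝ → ℝ) : Prop :=
  Measurable g ∧ (∀ᶠ b in atTop, 0 < g b) ∧
  ∀ c > 0, Tendsto (fun b => g (c * b) / g b) atTop (nhds 1)

def SlowlyVaryingAtZero (θ : ℝ → ℝ) : Prop :=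
  Measurable θ ∧ (∀ᶠ u in nhdsWithin 0 (Ioi 0), 0 < θ u) ∧
  ∀ c > 0, Tendsto (fun u => θ (c * u) / θ u) (nhdsWithin 0 (Ioi 0)) (nhds 1)

/-- Karamata representation `θ(u) = c(u) exp(∫_u^1 ε(v)/v dv)` on `(0,1)`, with `c` a positive
bounded measurable function having a nonzero limit at `0`, and `ε` bounded measurable with
limit `0` at `0`. -/
def KaramataRep (θ c ε : ℝ → ℝ) : Prop :=
  Measurable c ∧ Measurable ε ∧ (∀ u, 0 < c u) ∧ (∃ M : ℝ, ∀ u, c u ≤ M) ∧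
  (∃ L : ℝ, L ≠ 0 ∧ Tendsto c (nhdsWithin 0 (Ioi 0)) (nhds L)) ∧
  (∃ M : ℝ, ∀ u, |ε u| ≤ M) ∧ Tendsto ε (nhdsWithin 0 (Ioi 0)) (nhds 0) ∧
  ∀ u ∈ Ioo (0:ℝ) 1, θ u = c u * Real.exp (∫ v in Ioc u 1, ε v / v)

/-- `argmax_{t ∈ F} f := sup { t₀ ∈ F | f(t₀) = sup_{t ∈ F} f(t) }`. -/
def argmaxOn (f : ℝ → ℝ) (F : Set ℝ) : ℝ := sSup {t ∈ F | f t = sSup (f '' F)}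

/-- The Groeneboom process `τ(a) = argmax_{t ≥ 0} (W(t) - t/a)`. -/
def tauProc {Ω : Type*} (W : Ω → ℝ → ℝ) (ω : Ω) (a : ℝ) : ℝ :=
  argmaxOn (fun t => W ω t - t / a) (Ici 0)

open Classical in
/-- The Lebesgue–Stieltjes measure of a monotone function (zero if not monotone). -/
def lsMeasure (f : ℝ → ℝ) : Measure ℝ :=
  if hf : Monotone f then hf.stieltjesFunction.measure else 0

/-- Lebesgue–Stieltjes integral `∫_{(b₀,b]} g df`. -/
def lsIntegral (f g : ℝ → ℝ) (b₀ b : ℝ) : ℝ := ∫ a in Ioc b₀ b, g a ∂(lsMeasure f)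

/-- `L_ψ(b₀,b) = ∫_{(b₀,b]} ψ(a⁻¹) dτ(a)`. -/
def Lpsi {Ω : Type*} (ψ : ℝ → ℝ) (W : Ω → ℝ → ℝ) (ω : Ω) (b₀ b : ℝ) : ℝ :=
  lsIntegral (tauProc W ω) (fun a => ψ a⁻¹) b₀ b

/-- `m_ψ(b) = ∫_1^b a ψ(a⁻¹) da`. -/
def mPsi (ψ : ℝ → ℝ) (b : ℝ) : ℝ := ∫ a in Ioc (1:ℝ) b, a * ψ a⁻¹

/-- `P(ξ₁, ξ₂, b) = { ρ | (log b)^{-ξ₁} < ρ < (log b)^{-ξ₂} }`. -/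
def Pset (ξ₁ ξ₂ b : ℝ) : Set ℝ := {ρ : ℝ | Real.log b ^ (-ξ₁) < ρ ∧ ρ < Real.log b ^ (-ξ₂)}

/-- The measure `μ₁ = 2 φ(z) s⁻¹ ds dz` on `(0,1] × (0,∞)`. -/
def mu1 : Measure (ℝ × ℝ) :=
  ((volume.restrict (Ioc (0:ℝ) 1)).prod (volume.restrict (Ioi (0:ℝ)))).withDensity
    fun p => ENNReal.ofReal (2 * gaussianPDFReal 0 1 p.2 * p.1⁻¹)

/-- The pushforward `μ_{ψ,b}` of `μ₁` restricted to `{ s > b⁻¹ }` under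
`(s,z) ↦ z² s^{2-κ} θ((sb)⁻¹)/θ(b⁻¹)`. -/
def muPsi (θ : ℝ → ℝ) (κ b : ℝ) : Measure ℝ :=
  Measure.map (fun p : ℝ × ℝ => p.2 ^ 2 * p.1 ^ (2 - κ) * (θ (p.1 * b)⁻¹ / θ b⁻¹))
    (mu1.restrict {p : ℝ × ℝ | b⁻¹ < p.1})

/-- **Proposition 2 (change of variables).** If `τ` is non-decreasing and right-continuous
(a Stieltjes function), nonnegative on `[1,∞)`, and `D` is positive non-increasing
left-continuous on `(0,∞)` with `D(t) ≥ 1/a ↔ t ≤ τ(a)` for `a ≥ 1`, `t > 0`, then for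
every continuous `ψ` on `[0,∞)` and `b ≥ b₀ ≥ 1`,
`∫_{(b₀,b]} ψ(a⁻¹) dτ(a) = ∫_{τ(b₀)}^{τ(b)} ψ(D(t)) dt`. -/
theorem stieltjes_change_of_variables
    (τ : StieltjesFunction ℝ) (hτnn : ∀ a : ℝ, 1 ≤ a → 0 ≤ τ a)
    (D : ℝ → ℝ) (hDpos : ∀ t : ℝ, 0 < t → 0 < D t)
    (hDanti : AntitoneOn D (Ioi 0))
    (hDlc : ∀ t : ℝ, 0 < t → ContinuousWithinAt D (Iic t) t)
    (hDτ : ∀ a : ℝ, 1 ≤ a → ∀ t : ℝ, 0 < t → (1 / a ≤ D t ↔ t ≤ τ a))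
    (ψ : ℝ → ℝ) (hψ : ContinuousOn ψ (Ici 0))
    (b₀ b : ℝ) (hb₀ : 1 ≤ b₀) (hb : b₀ ≤ b) :
    ∫ a in Ioc b₀ b, ψ a⁻¹ ∂τ.measure = ∫ t in Ioc (τ b₀) (τ b), ψ (D t) := by
  have hb1 : 1 ≤ b := hb₀.trans hb
  have hτb₀0 : 0 ≤ τ b₀ := hτnn b₀ hb₀
  set I : Set ℝ := Ioc (τ b₀) (τ b) with hIdef
  have htpos : ∀ t ∈ I, 0 < t := fun t ht => hτb₀0.trans_lt ht.1
  set g : ℝ → ℝ := fun t => if 0 < t then (D t)⁻¹ else 0 with hgdef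
  have hgI : ∀ t ∈ I, g t = (D t)⁻¹ := fun t ht => if_pos (htpos t ht)
  -- key equivalence
  have key : ∀ a : ℝ, 1 ≤ a → ∀ t ∈ I, (g t ≤ a ↔ t ≤ τ a) := by
    intro a ha t ht
    have ht0 := htpos t ht
    rw [hgI t ht, inv_eq_one_div, ← hDτ a ha t ht0,
      one_div_le (hDpos t ht0) (lt_of_lt_of_le one_pos ha)]
  have hgmem : ∀ t ∈ I, g t ∈ Ioc b₀ b := by
    intro t ht
    refine ⟨?_, (key b hb1 t ht).mpr ht.2⟩
    by_contra h
    exact absurd ((key b₀ hb₀ t ht).mp (not_lt.mp h)) (not_le.mpr ht.1)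
  have hgmono : Monotone g := by
    intro s t hst
    rcases lt_or_ge 0 s with hs | hs
    · have ht : 0 < t := hs.trans_le hst
      simp only [hgdef, if_pos hs, if_pos ht]
      exact inv_anti₀ (hDpos t ht) (hDanti hs ht hst)
    · simp only [hgdef, if_neg (not_lt.mpr hs)]
      rcases lt_or_ge 0 t with ht | ht
      · simp only [if_pos ht]
        exact le_of_lt (inv_pos.mpr (hDpos t ht))
      · simp [if_neg (not_lt.mpr ht)]
  have hgmeas : Measurable g := hgmono.measurable
  haveI : IsFiniteMeasure (volume.restrict I) := by
    constructor
    rw [Measure.restrict_apply_univ, hIdef, Real.volume_Ioc]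
    exact ENNReal.ofReal_lt_top
  -- the pushforward identity
  have hmap : Measure.map g (volume.restrict I) = τ.measure.restrict (Ioc b₀ b) := by
    refine Measure.ext_of_Ioc' _ _ (fun c d _ => ?_) (fun c d hcd => ?_)
    · rw [Measure.map_apply hgmeas measurableSet_Ioc]
      exact ((measure_mono (subset_univ _)).trans_lt (measure_lt_top _ _)).ne
    · rw [Measure.map_apply hgmeas measurableSet_Ioc,
        Measure.restrict_apply (hgmeas measurableSet_Ioc),
        Measure.restrict_apply measurableSet_Ioc, Set.Ioc_inter_Ioc]
      set c' := max c b₀ with hc'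
      set d' := min d b with hd'
      have hc'1 : 1 ≤ c' := hb₀.trans (le_max_right c b₀)
      have hset : g ⁻¹' Ioc c d ∩ I = Ioc (τ c') (τ d') := by
        ext t
        simp only [mem_inter_iff, mem_preimage, mem_Ioc]
        constructor
        · rintro ⟨⟨hc, hd⟩, ht⟩
          have hmem := hgmem t ht
          have hc'g : c' < g t := max_lt hc hmem.1
          have hd'g : g t ≤ d' := le_min hd hmem.2
          have hd'1 : 1 ≤ d' := hc'1.trans (hc'g.trans_le hd'g).le
          refine ⟨?_, (key d' hd'1 t ht).mp hd'g⟩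
          by_contra h
          exact absurd ((key c' hc'1 t ht).mpr (not_lt.mp h)) (not_le.mpr hc'g)
        · rintro ⟨hc, hd⟩
          have hc'd' : c' < d' := by
            by_contra h
            exact absurd (τ.mono (not_lt.mp h)) (not_le.mpr (hc.trans_le hd))
          have hd'1 : 1 ≤ d' := hc'1.trans hc'd'.le
          have ht : t ∈ I := ⟨(τ.mono (le_max_right c b₀)).trans_lt hc,
            hd.trans (τ.mono (min_le_right d b))⟩
          have hgd : g t ≤ d := ((key d' hd'1 t ht).mpr hd).trans (min_le_left d b)
          have hgc : c < g t := by
            have : c' < g t := by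
              by_contra h
              exact absurd ((key c' hc'1 t ht).mp (not_lt.mp h)) (not_le.mpr hc)
            exact (le_max_left c b₀).trans_lt this
          exact ⟨⟨hgc, hgd⟩, ht⟩
      rw [hset, Real.volume_Ioc, τ.measure_Ioc]
  -- measurability of the integrand
  have hψinv : AEStronglyMeasurable (fun a : ℝ => ψ a⁻¹) (τ.measure.restrict (Ioc b₀ b)) := by
    refine ContinuousOn.aestronglyMeasurable ?_ measurableSet_Ioc
    refine hψ.comp (ContinuousOn.inv₀ continuousOn_id fun a ha => ?_) fun a ha => ?_
    · exact ne_of_gt (lt_of_lt_of_le one_pos (hb₀.trans ha.1.le))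
    · exact le_of_lt (inv_pos.mpr (lt_of_lt_of_le one_pos (hb₀.trans ha.1.le)))
  calc ∫ a in Ioc b₀ b, ψ a⁻¹ ∂τ.measure
      = ∫ a, ψ a⁻¹ ∂(Measure.map g (volume.restrict I)) := by rw [hmap]
    _ = ∫ t in I, ψ (g t)⁻¹ := integral_map hgmeas.aemeasurable (by rwa [hmap])
    _ = ∫ t in Ioc (τ b₀) (τ b), ψ (D t) := by
        refine setIntegral_congr_fun measurableSet_Ioc fun t ht => ?_
        rw [hgI t ht, inv_inv]
end
end

section
/- Let (L(b))_{b ≥ 1} be a family of nonnegative square-integrable random variables on a common probability space such that almost surely b ↦ L(b) is non-decreasing, and such that E L(b) is positive for all sufficiently large b. Define q(b) := Var L(b) / (E L(b))². Suppose there exists σ > 0 such that q(b) = O((log b)^{−σ}) as b → ∞, and suppose that for some γ > 1/σ, lim_{n→∞} E L(exp(n^γ)) / E L(exp((n+1)^γ)) = 1. Then almost surely lim_{b→∞} L(b) / E L(b) = 1. -/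
open MeasureTheory ProbabilityTheory Filter Set

noncomputable section

open Asymptotics in
/-- **Lemma 6 (general a.s. convergence).** If `q(b) = Var L(b)/(E L(b))² = O((log b)^{-σ})`
and `E L(exp(n^γ))/E L(exp((n+1)^γ)) → 1` for some `γ > 1/σ`, then for an a.s. non-decreasing
nonnegative square-integrable family `L(b)`, a.s. `L(b)/E L(b) → 1`. -/
theorem as_convergence_of_monotone_family
    {Ω : Type*} [MeasurableSpace Ω] (μ : Measure Ω) [IsProbabilityMeasure μ]
    (L : ℝ → Ω → ℝ)
    (hL2 : ∀ b : ℝ, 1 ≤ b → MemLp (L b) 2 μ)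
    (hLnn : ∀ b : ℝ, 1 ≤ b → ∀ ω, 0 ≤ L b ω)
    (hmono : ∀ᵐ ω ∂μ, ∀ b b' : ℝ, 1 ≤ b → b ≤ b' → L b ω ≤ L b' ω)
    (hEpos : ∀ᶠ b in atTop, 0 < ∫ ω, L b ω ∂μ)
    (σ : ℝ) (hσ : 0 < σ)
    (hq : (fun b : ℝ => variance (L b) μ / (∫ ω, L b ω ∂μ) ^ 2) =O[atTop]
      fun b : ℝ => Real.log b ^ (-σ))
    (γ : ℝ) (hγ : 1 / σ < γ)
    (hm : Tendsto (fun n : ℕ => (∫ ω, L (Real.exp ((n : ℝ) ^ γ)) ω ∂μ) /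
      ∫ ω, L (Real.exp (((n : ℝ) + 1) ^ γ)) ω ∂μ) atTop (nhds 1)) :
    ∀ᵐ ω ∂μ, Tendsto (fun b : ℝ => L b ω / ∫ ω' , L b ω' ∂μ) atTop (nhds 1) := by
  classical
  set m : ℝ → ℝ := fun b => ∫ ω, L b ω ∂μ with hm_def
  have hγpos : 0 < γ := lt_trans (by positivity) hγ
  have hσγ : 1 < γ * σ := by rw [div_lt_iff₀ hσ] at hγ; linarith
  set b : ℕ → ℝ := fun n => Real.exp ((n : ℝ) ^ γ) with hb_def
  have hb1 : ∀ n, 1 ≤ b n := fun n =>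
    Real.one_le_exp (Real.rpow_nonneg (Nat.cast_nonneg n) γ)
  have hbmono : Monotone b := fun i j h => Real.exp_le_exp.2
    (Real.rpow_le_rpow (Nat.cast_nonneg i) (Nat.cast_le.2 h) hγpos.le)
  have hbtop : Tendsto b atTop atTop :=
    Real.tendsto_exp_atTop.comp
      ((tendsto_rpow_atTop hγpos).comp tendsto_natCast_atTop_atTop)
  have hInt : ∀ x : ℝ, 1 ≤ x → Integrable (L x) μ := fun x hx =>
    (hL2 x hx).integrable one_le_two
  have hmmono : ∀ x y : ℝ, 1 ≤ x → x ≤ y → m x ≤ m y := fun x y h1 h12 =>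
    integral_mono_ae (hInt x h1) (hInt y (h1.trans h12))
      (hmono.mono fun ω h => h x y h1 h12)
  obtain ⟨B, hB⟩ := eventually_atTop.1 hEpos
  obtain ⟨N₂, hN₂⟩ := eventually_atTop.1 (hbtop.eventually (eventually_ge_atTop B))
  have hmbpos : ∀ n, N₂ ≤ n → 0 < m (b n) := fun n hn => hB _ (hN₂ n hn)
  set q : ℝ → ℝ := fun x => variance (L x) μ / (m x) ^ 2 with hq_def
  have hqnn : ∀ x, 0 ≤ q x := fun x => div_nonneg (variance_nonneg _ _) (sq_nonneg _)
  obtain ⟨C, hC⟩ := Asymptotics.isBigO_iff.1 hq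
  have hqb : ∀ᶠ n : ℕ in atTop, q (b n) ≤ C * (n : ℝ) ^ (-(γ * σ)) := by
    filter_upwards [hbtop.eventually hC, eventually_ge_atTop 1] with n hn hn1
    have hnpos : (0 : ℝ) < n := by exact_mod_cast hn1
    have hlog : Real.log (b n) = (n : ℝ) ^ γ := Real.log_exp _
    have hkey : Real.log (b n) ^ (-σ) = (n : ℝ) ^ (-(γ * σ)) := by
      rw [hlog, ← Real.rpow_mul hnpos.le]
      ring_nf
    calc q (b n) ≤ |q (b n)| := le_abs_self _
      _ ≤ C * |Real.log (b n) ^ (-σ)| := hn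
      _ = C * (n : ℝ) ^ (-(γ * σ)) := by
          rw [hkey, abs_of_pos (Real.rpow_pos_of_pos hnpos _)]
  obtain ⟨N₁, hN₁⟩ := eventually_atTop.1 hqb
  set N : ℕ := max N₁ N₂ with hN_def
  have hsum : Summable (fun n : ℕ => C * (n : ℝ) ^ (-(γ * σ))) :=
    (Real.summable_nat_rpow.2 (by linarith)).mul_left C
  have key : ∀ k : ℕ, ∀ᵐ ω ∂μ, ∀ᶠ n in atTop,
      |L (b n) ω - m (b n)| < (1 / ((k : ℝ) + 1)) * m (b n) := by
    intro k
    set c : ℝ := 1 / ((k : ℝ) + 1) with hc_def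
    have hcpos : 0 < c := by positivity
    set A : ℕ → Set Ω :=
      fun n => {ω | c * m (b (n + N)) ≤ |L (b (n + N)) ω - m (b (n + N))|} with hA_def
    have hA : ∀ n, μ (A n) ≤ ENNReal.ofReal (q (b (n + N)) / c ^ 2) := by
      intro n
      have hpos : 0 < m (b (n + N)) :=
        hmbpos _ (le_trans (le_max_right N₁ N₂) (Nat.le_add_left N n))
      have hcheb := meas_ge_le_variance_div_sq (μ := μ)
        (hL2 (b (n + N)) (hb1 _)) (mul_pos hcpos hpos)
      refine le_trans hcheb (le_of_eq ?_)
      congr 1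
      rw [hq_def]
      rw [mul_pow, div_div, mul_comm (c ^ 2)]
    have hsum2 : Summable (fun n : ℕ => q (b (n + N)) / c ^ 2) := by
      apply Summable.div_const
      refine Summable.of_nonneg_of_le (fun n => hqnn _)
        (fun n => hN₁ (n + N) (le_trans (le_max_left N₁ N₂) (Nat.le_add_left N n))) ?_
      exact_mod_cast (summable_nat_add_iff N).2 hsum
    have htsum : (∑' n, μ (A n)) ≠ ⊤ := by
      have h1 : (∑' n, μ (A n)) ≤ ∑' n, ENNReal.ofReal (q (b (n + N)) / c ^ 2) :=
        ENNReal.tsum_le_tsum hA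
      rw [← ENNReal.ofReal_tsum_of_nonneg
        (fun n => div_nonneg (hqnn _) (sq_nonneg c)) hsum2] at h1
      exact ne_top_of_le_ne_top ENNReal.ofReal_ne_top h1
    filter_upwards [MeasureTheory.ae_eventually_notMem htsum] with ω hω
    rw [eventually_atTop] at hω ⊢
    obtain ⟨M, hM⟩ := hω
    refine ⟨M + N, fun n hn => ?_⟩
    have h := hM (n - N) (by omega)
    rw [hA_def] at h
    simp only [Set.mem_setOf_eq, Nat.sub_add_cancel (by omega : N ≤ n), not_le] at h
    exact h
  have keyall : ∀ᵐ ω ∂μ, ∀ k : ℕ, ∀ᶠ n in atTop,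
      |L (b n) ω - m (b n)| < (1 / ((k : ℝ) + 1)) * m (b n) := ae_all_iff.2 key
  have hsub : ∀ᵐ ω ∂μ, Tendsto (fun n => L (b n) ω / m (b n)) atTop (nhds 1) := by
    filter_upwards [keyall] with ω hω
    rw [Metric.tendsto_atTop]
    intro ε hε
    obtain ⟨k, hk⟩ := exists_nat_one_div_lt hε
    obtain ⟨M, hM⟩ := eventually_atTop.1 (hω k)
    refine ⟨max M N₂, fun n hn => ?_⟩
    have hpos := hmbpos n (le_of_max_le_right hn)
    have h := hM n (le_of_max_le_left hn)
    rw [Real.dist_eq]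
    have heq : L (b n) ω / m (b n) - 1 = (L (b n) ω - m (b n)) / m (b n) := by
      field_simp
    rw [heq, abs_div, abs_of_pos hpos, div_lt_iff₀ hpos]
    exact lt_trans h (by
      have := mul_lt_mul_of_pos_right hk hpos
      exact this)
  have hr : Tendsto (fun n : ℕ => m (b n) / m (b (n + 1))) atTop (nhds 1) := by
    have heq : (fun n : ℕ => m (b n) / m (b (n + 1))) =
        (fun n : ℕ => (∫ ω, L (Real.exp ((n : ℝ) ^ γ)) ω ∂μ) /
          ∫ ω, L (Real.exp (((n : ℝ) + 1) ^ γ)) ω ∂μ) := by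
      funext n
      simp only [hm_def, hb_def]
      norm_num
    rw [heq]; exact hm
  set nb : ℝ → ℕ := fun x => ⌊(Real.log x) ^ (1 / γ)⌋₊ with hnb_def
  have hnbtop : Tendsto nb atTop atTop :=
    tendsto_nat_floor_atTop.comp
      ((tendsto_rpow_atTop (by positivity)).comp Real.tendsto_log_atTop)
  have hblow : ∀ᶠ x in atTop, b (nb x) ≤ x := by
    filter_upwards [eventually_ge_atTop (Real.exp 1)] with x hx
    have hxpos : 0 < x := lt_of_lt_of_le (Real.exp_pos 1) hx
    have hlx : 0 ≤ Real.log x := by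
      have h := Real.log_le_log (Real.exp_pos 1) hx
      rw [Real.log_exp] at h
      linarith
    have h1 : ((nb x : ℝ)) ≤ Real.log x ^ (1 / γ) :=
      Nat.floor_le (Real.rpow_nonneg hlx _)
    have h2 : ((nb x : ℝ)) ^ γ ≤ Real.log x := by
      calc ((nb x : ℝ)) ^ γ ≤ (Real.log x ^ (1 / γ)) ^ γ :=
            Real.rpow_le_rpow (Nat.cast_nonneg _) h1 hγpos.le
        _ = Real.log x := by
            rw [← Real.rpow_mul hlx, one_div_mul_cancel hγpos.ne', Real.rpow_one]
    calc b (nb x) = Real.exp ((nb x : ℝ) ^ γ) := rfl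
      _ ≤ Real.exp (Real.log x) := Real.exp_le_exp.2 h2
      _ = x := Real.exp_log hxpos
  have hbhigh : ∀ᶠ x in atTop, x ≤ b (nb x + 1) := by
    filter_upwards [eventually_ge_atTop (Real.exp 1)] with x hx
    have hxpos : 0 < x := lt_of_lt_of_le (Real.exp_pos 1) hx
    have hlx : 0 ≤ Real.log x := by
      have h := Real.log_le_log (Real.exp_pos 1) hx
      rw [Real.log_exp] at h
      linarith
    have h1 : Real.log x ^ (1 / γ) ≤ (nb x : ℝ) + 1 := (Nat.lt_floor_add_one _).le
    have h2 : Real.log x ≤ ((nb x : ℝ) + 1) ^ γ := by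
      calc Real.log x = (Real.log x ^ (1 / γ)) ^ γ := by
            rw [← Real.rpow_mul hlx, one_div_mul_cancel hγpos.ne', Real.rpow_one]
        _ ≤ ((nb x : ℝ) + 1) ^ γ :=
            Real.rpow_le_rpow (Real.rpow_nonneg hlx _) h1 hγpos.le
    calc x = Real.exp (Real.log x) := (Real.exp_log hxpos).symm
      _ ≤ Real.exp (((nb x : ℝ) + 1) ^ γ) := Real.exp_le_exp.2 h2
      _ = b (nb x + 1) := by rw [hb_def]; push_cast; ring_nf
  filter_upwards [hsub, hmono] with ω hωsub hωmono
  have hlow : Tendsto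
      (fun x : ℝ => (L (b (nb x)) ω / m (b (nb x))) * (m (b (nb x)) / m (b (nb x + 1))))
      atTop (nhds 1) := by
    have h := (hωsub.mul hr).comp hnbtop
    rw [mul_one] at h
    exact h
  have hup : Tendsto
      (fun x : ℝ => (L (b (nb x + 1)) ω / m (b (nb x + 1))) *
        (m (b (nb x)) / m (b (nb x + 1)))⁻¹) atTop (nhds 1) := by
    have h1 : Tendsto (fun n : ℕ => (L (b (n + 1)) ω / m (b (n + 1))) *
        (m (b n) / m (b (n + 1)))⁻¹) atTop (nhds 1) := by
      have := (hωsub.comp (tendsto_add_atTop_nat 1)).mul (hr.inv₀ one_ne_zero)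
      simpa using this
    exact h1.comp hnbtop
  refine tendsto_of_tendsto_of_tendsto_of_le_of_le' hlow hup ?_ ?_
  · filter_upwards [hblow, hbhigh, hnbtop.eventually (eventually_ge_atTop N₂),
      eventually_ge_atTop (max 1 B)] with x h1 h2 h3 h4
    have hx1 : (1 : ℝ) ≤ x := le_trans (le_max_left 1 B) h4
    have hmxpos : 0 < m x := hB x (le_trans (le_max_right 1 B) h4)
    have hpn : 0 < m (b (nb x)) := hmbpos _ h3
    have hpn1 : 0 < m (b (nb x + 1)) := hmbpos _ (le_trans h3 (Nat.le_succ _))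
    have heq : L (b (nb x)) ω / m (b (nb x)) * (m (b (nb x)) / m (b (nb x + 1))) =
        L (b (nb x)) ω / m (b (nb x + 1)) := by
      field_simp
    rw [heq]
    exact div_le_div₀ (hLnn x hx1 ω) (hωmono _ _ (hb1 _) h1) hmxpos (hmmono x _ hx1 h2)
  · filter_upwards [hblow, hbhigh, hnbtop.eventually (eventually_ge_atTop N₂),
      eventually_ge_atTop (max 1 B)] with x h1 h2 h3 h4
    have hx1 : (1 : ℝ) ≤ x := le_trans (le_max_left 1 B) h4
    have hpn : 0 < m (b (nb x)) := hmbpos _ h3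
    have hpn1 : 0 < m (b (nb x + 1)) := hmbpos _ (le_trans h3 (Nat.le_succ _))
    have heq : L (b (nb x + 1)) ω / m (b (nb x + 1)) * (m (b (nb x)) / m (b (nb x + 1)))⁻¹ =
        L (b (nb x + 1)) ω / m (b (nb x)) := by
      rw [inv_div]
      field_simp
    rw [heq]
    exact div_le_div₀ (hLnn _ (hb1 _) ω) (hωmono _ _ hx1 h2) hpn (hmmono _ x (hb1 _) h1)
end
end
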